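/- arXiv:2410.08957 — 2 statements merged into one kernel-verified Lean document; each statement's English description precedes it below -/
import Mathlib

section
/- In the cut-vertex setup, let μ be a symmetric weight on F. Then for all x ∈ V(Ḡ) and y ∈ V(H̄): P_{F,μ}(x⁻ ∼_F y⁻) − P_{F,μ}(x⁻ ∼_F y⁺) = (P_{H₀,μ}(v⁻ ∼_{H₀} y⁻) − P_{H₀,μ}(v⁻ ∼_{H₀} y⁺)) · (P_{G,μ}(x⁻ ∼_G v⁻) − P_{G,μ}(x⁻ ∼_G v⁺)). -/
open Classical

noncomputable def edgeFin {V : Type*} [Fintype V] (G : SimpleGraph V) : Finset (Sym2 V) :=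
  G.edgeSet.toFinset

noncomputable def percWeight {V : Type*} [Fintype V] (G : SimpleGraph V)
    (μ : Sym2 V → ℝ) (K : Finset (Sym2 V)) : ℝ :=
  (∏ e ∈ K, μ e) * ∏ e ∈ edgeFin G \ K, (1 - μ e)

noncomputable def percProb {V : Type*} [Fintype V] (G : SimpleGraph V)
    (μ : Sym2 V → ℝ) (A : Finset (Sym2 V) → Prop) : ℝ :=
  ∑ K ∈ (edgeFin G).powerset, if A K then percWeight G μ K else 0

def ConnIn {V : Type*} (K : Finset (Sym2 V)) (x y : V) : Prop :=
  (SimpleGraph.fromEdgeSet (↑K : Set (Sym2 V))).Reachable x y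

def IsWeight {V : Type*} (G : SimpleGraph V) (μ : Sym2 V → ℝ) : Prop :=
  ∀ e ∈ G.edgeSet, 0 ≤ μ e ∧ μ e ≤ 1

def BB {V : Type*} (G : SimpleGraph V) : SimpleGraph (V × Bool) :=
  G.boxProd ⊤

def IsSymWeight {V : Type*} (G : SimpleGraph V) (μ : Sym2 (V × Bool) → ℝ) : Prop :=
  ∀ x y : V, G.Adj x y →
    μ s((x, false), (y, false)) = μ s((x, true), (y, true))

def SatisfiesBunkbed {V : Type*} [Fintype V] (G : SimpleGraph V) : Prop :=
  ∀ μ : Sym2 (V × Bool) → ℝ, IsWeight (BB G) μ → IsSymWeight G μ →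
    ∀ x y : V,
      percProb (BB G) μ (fun K => ConnIn K (x, false) (y, true)) ≤
        percProb (BB G) μ (fun K => ConnIn K (x, false) (y, false))

def restrict {V : Type*} (G : SimpleGraph V) (S : Set V) : SimpleGraph V where
  Adj x y := G.Adj x y ∧ x ∈ S ∧ y ∈ S
  symm := ⟨fun x y h => ⟨h.1.symm, h.2.2, h.2.1⟩⟩
  loopless := ⟨fun x h => G.loopless.irrefl x h.1⟩

def IsCutVertex {V : Type*} (G : SimpleGraph V) (v : V) : Prop :=
  ∃ x y : ({u | u ≠ v} : Set V),
    G.Reachable x.1 y.1 ∧ ¬ (G.induce {u | u ≠ v}).Reachable x y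

/-- The copy of `BB (F̄[S])` sitting inside `BB F̄` (as a spanning subgraph on `V × Bool`):
its edges are the two horizontal copies of the edges of `F̄` inside `S`, together with the
vertical edges at the vertices of `S`. -/
def bbSide {V : Type*} (Fbar : SimpleGraph V) (S : Set V) : SimpleGraph (V × Bool) :=
  restrict (BB Fbar) {p : V × Bool | p.1 ∈ S}

/-- `H₀`: the graph `H = BB (F̄[T])` with the vertical edge `v⁻v⁺` deleted. -/
def bbSideDel {V : Type*} (Fbar : SimpleGraph V) (T : Set V) (v : V) :
    SimpleGraph (V × Bool) :=
  (bbSide Fbar T).deleteEdges {s((v, false), (v, true))}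



lemma sum_powerset_union_disj {α : Type*} [DecidableEq α] (s t : Finset α) (hd : Disjoint s t)
    (f : Finset α → ℝ) :
    ∑ K ∈ (s ∪ t).powerset, f K = ∑ a ∈ s.powerset, ∑ b ∈ t.powerset, f (a ∪ b) := by
  have hsplit : ∀ K ∈ (s ∪ t).powerset, K ∩ s ∪ K ∩ t = K := by
    intro K hK
    rw [Finset.mem_powerset] at hK
    rw [← Finset.inter_union_distrib_left, Finset.inter_eq_left.mpr hK]
  rw [← Finset.sum_product']
  refine Finset.sum_nbij' (i := fun K => (K ∩ s, K ∩ t)) (j := fun p => p.1 ∪ p.2)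
    ?_ ?_ ?_ ?_ ?_
  · intro K hK
    simp only [Finset.mem_product, Finset.mem_powerset]
    exact ⟨Finset.inter_subset_right, Finset.inter_subset_right⟩
  · intro p hp
    simp only [Finset.mem_product, Finset.mem_powerset] at hp ⊢
    exact Finset.union_subset (hp.1.trans Finset.subset_union_left)
      (hp.2.trans Finset.subset_union_right)
  · exact hsplit
  · rintro ⟨a, b⟩ hp
    simp only [Finset.mem_product, Finset.mem_powerset] at hp
    have hbs : b ∩ s = ∅ := Finset.eq_empty_of_forall_notMem fun x hx =>
      Finset.disjoint_right.mp hd (hp.2 (Finset.mem_inter.mp hx).1) (Finset.mem_inter.mp hx).2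
    have hat : a ∩ t = ∅ := Finset.eq_empty_of_forall_notMem fun x hx =>
      Finset.disjoint_left.mp hd (hp.1 (Finset.mem_inter.mp hx).1) (Finset.mem_inter.mp hx).2
    have ha : (a ∪ b) ∩ s = a := by
      rw [Finset.union_inter_distrib_right, Finset.inter_eq_left.mpr hp.1, hbs,
        Finset.union_empty]
    have hb : (a ∪ b) ∩ t = b := by
      rw [Finset.union_inter_distrib_right, Finset.inter_eq_left.mpr hp.2, hat,
        Finset.empty_union]
    simp [ha, hb]
  · intro K hK
    simp only []
    rw [hsplit K hK]

namespace BBAux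

lemma mem_sdiff' {α : Type*} {inst : DecidableEq α} {s t : Finset α} {a : α} :
    a ∈ @SDiff.sdiff _ (@Finset.instSDiff _ inst) s t ↔ a ∈ s ∧ a ∉ t :=
  @Finset.mem_sdiff _ inst _ _ _


variable {V : Type*}

/-- The level-swapping involution on `V × Bool`. -/
def flipV : V × Bool → V × Bool := fun p => (p.1, !p.2)

lemma flipV_invol (p : V × Bool) : flipV (flipV p) = p := by
  cases p with
  | mk a b => simp [flipV]

lemma flipV_inj : Function.Injective (flipV (V := V)) := by
  intro a b h
  rw [← flipV_invol a, h, flipV_invol]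

/-- The level-swapping involution on edges. -/
def flipE : Sym2 (V × Bool) → Sym2 (V × Bool) := Sym2.map flipV

lemma flipE_pair (p q : V × Bool) : flipE s(p, q) = s(flipV p, flipV q) :=
  Sym2.map_pair_eq _ _ _

lemma flipE_invol (e : Sym2 (V × Bool)) : flipE (flipE e) = e := by
  induction e using Sym2.ind with
  | _ p q => rw [flipE_pair, flipE_pair, flipV_invol, flipV_invol]

lemma flipE_inj : Function.Injective (flipE (V := V)) :=
  Sym2.map.injective flipV_inj

lemma bb_adj_flip (Fbar : SimpleGraph V) (p q : V × Bool) :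
    (BB Fbar).Adj (flipV p) (flipV q) ↔ (BB Fbar).Adj p q := by
  cases p with
  | mk a i =>
    cases q with
    | mk b j =>
      simp only [BB, SimpleGraph.boxProd_adj, flipV, SimpleGraph.top_adj]
      cases i <;> cases j <;> simp

lemma flipE_vert (v : V) : flipE s((v, false), (v, true)) = s((v, false), (v, true)) := by
  rw [flipE_pair]
  simp only [flipV, Bool.not_false, Bool.not_true]
  rw [Sym2.eq_swap]

lemma del_adj_flip (Fbar : SimpleGraph V) (T : Set V) (v : V) (p q : V × Bool) :
    (bbSideDel Fbar T v).Adj (flipV p) (flipV q) ↔ (bbSideDel Fbar T v).Adj p q := by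
  simp only [bbSideDel, SimpleGraph.deleteEdges_adj, Set.mem_singleton_iff]
  constructor
  · rintro ⟨h1, h2⟩
    refine ⟨⟨(bb_adj_flip Fbar p q).mp h1.1, h1.2.1, h1.2.2⟩, ?_⟩
    intro he
    exact h2 (by rw [← flipE_pair, he, flipE_vert])
  · rintro ⟨h1, h2⟩
    refine ⟨⟨(bb_adj_flip Fbar p q).mpr h1.1, h1.2.1, h1.2.2⟩, ?_⟩
    intro he
    apply h2
    have := congrArg flipE he
    rw [← flipE_pair] at he
    have h3 := congrArg flipE he
    rw [flipE_invol, flipE_vert] at h3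
    exact h3

end BBAux

namespace BBAux

section Split

variable {V : Type*} {Fbar : SimpleGraph V} {v : V} {S T : Set V}
variable (hST : S ∩ T = {v}) (hUnion : S ∪ T = Set.univ)
variable (hSep : ∀ x ∈ S, ∀ y ∈ T, Fbar.Adj x y → x = v ∨ y = v)

include hUnion in
lemma mem_of_union (u : V) : u ∈ S ∨ u ∈ T := by
  have : u ∈ S ∪ T := by rw [hUnion]; trivial
  exact this

include hST in
lemma eq_v_of_mem_both (u : V) (h1 : u ∈ S) (h2 : u ∈ T) : u = v := by
  have : u ∈ S ∩ T := ⟨h1, h2⟩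
  rwa [hST] at this

include hST in
lemma v_mem_S : v ∈ S := by
  have : v ∈ S ∩ T := by rw [hST]; rfl
  exact this.1

include hST in
lemma v_mem_T : v ∈ T := by
  have : v ∈ S ∩ T := by rw [hST]; rfl
  exact this.2

lemma vert_eq_iff (p q : V × Bool) (h : s(p, q) = s((v, false), (v, true))) :
    p.1 = v ∧ q.1 = v := by
  rw [Sym2.eq_iff] at h
  rcases h with ⟨h1, h2⟩ | ⟨h1, h2⟩ <;> rw [h1, h2] <;> exact ⟨rfl, rfl⟩

lemma side_adj (S : Set V) (p q : V × Bool) :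
    (bbSide Fbar S).Adj p q ↔ (BB Fbar).Adj p q ∧ p.1 ∈ S ∧ q.1 ∈ S := Iff.rfl

lemma del_adj (p q : V × Bool) :
    (bbSideDel Fbar T v).Adj p q ↔
      ((BB Fbar).Adj p q ∧ p.1 ∈ T ∧ q.1 ∈ T) ∧ s(p, q) ≠ s((v, false), (v, true)) := by
  simp only [bbSideDel, SimpleGraph.deleteEdges_adj, Set.mem_singleton_iff]
  exact Iff.rfl

include hST hUnion hSep in
lemma bb_adj_split (p q : V × Bool) :
    (BB Fbar).Adj p q ↔ (bbSide Fbar S).Adj p q ∨ (bbSideDel Fbar T v).Adj p q := by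
  constructor
  · intro h
    by_cases hb : p.1 ∈ S ∧ q.1 ∈ S
    · exact Or.inl ⟨h, hb.1, hb.2⟩
    · right
      have hnv : s(p, q) ≠ s((v, false), (v, true)) := by
        intro he
        obtain ⟨h1, h2⟩ := vert_eq_iff (v := v) p q he
        exact hb ⟨by rw [h1]; exact v_mem_S hST, by rw [h2]; exact v_mem_S hST⟩
      have hT : p.1 ∈ T ∧ q.1 ∈ T := by
        rcases SimpleGraph.boxProd_adj.mp h with ⟨hadj, _⟩ | ⟨_, heq⟩
        · rcases mem_of_union hUnion p.1 with hpS | hpT <;>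
            rcases mem_of_union hUnion q.1 with hqS | hqT
          · exact absurd ⟨hpS, hqS⟩ hb
          · constructor
            · rcases hSep p.1 hpS q.1 hqT hadj with h1 | h1
              · rw [h1]; exact v_mem_T hST
              · exact absurd ⟨hpS, by rw [h1]; exact v_mem_S hST⟩ hb
            · exact hqT
          · refine ⟨hpT, ?_⟩
            rcases hSep q.1 hqS p.1 hpT hadj.symm with h1 | h1
            · rw [h1]; exact v_mem_T hST
            · exact absurd ⟨by rw [h1]; exact v_mem_S hST, hqS⟩ hb
          · exact ⟨hpT, hqT⟩
        · have hne : p.1 ∉ S := fun hpS => hb ⟨hpS, heq ▸ hpS⟩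
          rcases mem_of_union hUnion p.1 with hpS | hpT
          · exact absurd hpS hne
          · exact ⟨hpT, heq ▸ hpT⟩
      exact (del_adj p q).mpr ⟨⟨h, hT.1, hT.2⟩, hnv⟩
  · rintro (h | h)
    · exact h.1
    · exact ((del_adj p q).mp h).1.1

include hST in
lemma bb_adj_not_both (p q : V × Bool) :
    ¬((bbSide Fbar S).Adj p q ∧ (bbSideDel Fbar T v).Adj p q) := by
  rintro ⟨h1, h2⟩
  obtain ⟨⟨hadj, hpT, hqT⟩, hnv⟩ := (del_adj p q).mp h2
  have hpv : p.1 = v := eq_v_of_mem_both hST p.1 h1.2.1 hpT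
  have hqv : q.1 = v := eq_v_of_mem_both hST q.1 h1.2.2 hqT
  rcases SimpleGraph.boxProd_adj.mp hadj with ⟨hFadj, _⟩ | ⟨hne, heq⟩
  · rw [hpv, hqv] at hFadj
    exact Fbar.loopless.irrefl v hFadj
  · apply hnv
    have hp : p = (v, p.2) := Prod.ext hpv rfl
    have hq : q = (v, q.2) := Prod.ext hqv rfl
    rw [hp, hq]
    have hne' : p.2 ≠ q.2 := (SimpleGraph.top_adj _ _).mp hne
    cases hb : p.2 <;> cases hc : q.2
    · rw [hb, hc] at hne'; exact absurd rfl hne'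
    · rfl
    · rw [Sym2.eq_swap]
    · rw [hb, hc] at hne'; exact absurd rfl hne'

end Split

end BBAux

namespace BBAux

section Conn

variable {V : Type*} [Fintype V] {Fbar : SimpleGraph V} {v : V} {S T : Set V}

lemma connIn_fst_gen {S' : Set V} {G' : SimpleGraph (V × Bool)}
    (hG' : ∀ a b : V × Bool, G'.Adj a b → a.1 ∈ S') {K : Finset (Sym2 (V × Bool))}
    (hK : K ⊆ edgeFin G') {p q : V × Bool} (h : ConnIn K p q) (hne : p ≠ q) : p.1 ∈ S' := by
  obtain ⟨w⟩ := h
  cases w with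
  | nil => exact absurd rfl hne
  | cons h' _ =>
    rename_i b _
    rw [SimpleGraph.fromEdgeSet_adj] at h'
    have hmem : s(p, b) ∈ edgeFin G' := hK h'.1
    rw [edgeFin, Set.mem_toFinset, SimpleGraph.mem_edgeSet] at hmem
    exact hG' p b hmem

variable (hST : S ∩ T = {v})

include hST in
/-- The key combinatorial decomposition of connectivity across the cut `{v⁻, v⁺}`. -/
lemma conn_decomp {iU : DecidableEq (Sym2 (V × Bool))}
    (KG KH : Finset (Sym2 (V × Bool)))
    (hKG : KG ⊆ edgeFin (bbSide Fbar S)) (hKH : KH ⊆ edgeFin (bbSideDel Fbar T v))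
    (x : V) (hx : x ∈ S) (z : V × Bool) (hz : z.1 ∈ T) :
    ConnIn (@Union.union _ (@Finset.instUnion _ iU) KG KH) (x, false) z ↔
      ∃ b b' : Bool, ConnIn KG (x, false) (v, b) ∧
        (b = b' ∨ ConnIn KG (v, false) (v, true) ∨ ConnIn KH (v, false) (v, true)) ∧
        ConnIn KH (v, b') z := by
  classical
  set GG := SimpleGraph.fromEdgeSet (↑KG : Set (Sym2 (V × Bool))) with hGG
  set HH := SimpleGraph.fromEdgeSet (↑KH : Set (Sym2 (V × Bool))) with hHH
  have hGfstS : ∀ a b : V × Bool, (bbSide Fbar S).Adj a b → a.1 ∈ S := fun a b h => h.2.1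
  have hHfstT : ∀ a b : V × Bool, (bbSideDel Fbar T v).Adj a b → a.1 ∈ T := fun a b h =>
    (((del_adj (Fbar := Fbar) (v := v) (T := T) a b).mp h).1.2.1)
  have hGfst : ∀ p q : V × Bool, GG.Reachable p q → p ≠ q → p.1 ∈ S ∧ q.1 ∈ S := by
    intro p q h hne
    exact ⟨connIn_fst_gen hGfstS hKG h hne, connIn_fst_gen hGfstS hKG h.symm hne.symm⟩
  have hHfst : ∀ p q : V × Bool, HH.Reachable p q → p ≠ q → p.1 ∈ T ∧ q.1 ∈ T := by
    intro p q h hne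
    exact ⟨connIn_fst_gen hHfstT hKH h hne, connIn_fst_gen hHfstT hKH h.symm hne.symm⟩
  have hmemv : ∀ u : V, u ∈ S → u ∈ T → u = v := fun u h1 h2 => eq_v_of_mem_both hST u h1 h2
  have hcoe : (↑(@Union.union _ (@Finset.instUnion _ iU) KG KH) : Set (Sym2 (V × Bool))) =
      (↑KG : Set (Sym2 (V × Bool))) ∪ (↑KH : Set (Sym2 (V × Bool))) := by
    ext e
    constructor
    · intro he
      rcases (@Finset.mem_union _ iU _ _ _).mp he with h | h
      · exact Or.inl h
      · exact Or.inr h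
    · intro he
      refine (@Finset.mem_union _ iU _ _ _).mpr ?_
      rcases he with h | h
      · exact Or.inl h
      · exact Or.inr h
  have hunion_graph :
      SimpleGraph.fromEdgeSet
        (↑(@Union.union _ (@Finset.instUnion _ iU) KG KH) : Set (Sym2 (V × Bool))) =
        GG ⊔ HH := by
    rw [hGG, hHH, ← SimpleGraph.fromEdgeSet_union, hcoe]
  constructor
  · intro h
    rw [ConnIn, hunion_graph] at h
    set A : Bool → Prop := fun b => GG.Reachable (x, false) (v, b) with hA
    set C : Prop := GG.Reachable (v, false) (v, true) ∨ HH.Reachable (v, false) (v, true)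
      with hC
    set B1 : Bool → Prop := fun b => ∃ b₀, A b₀ ∧ (b₀ = b ∨ C) with hB1def
    have hcrossG : ∀ b b' : Bool, GG.Reachable (v, b) (v, b') → b = b' ∨ C := by
      intro b b' hr
      cases b <;> cases b'
      · exact Or.inl rfl
      · exact Or.inr (Or.inl hr)
      · exact Or.inr (Or.inl hr.symm)
      · exact Or.inl rfl
    have hcrossH : ∀ b b' : Bool, HH.Reachable (v, b) (v, b') → b = b' ∨ C := by
      intro b b' hr
      cases b <;> cases b'
      · exact Or.inl rfl
      · exact Or.inr (Or.inr hr)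
      · exact Or.inr (Or.inr hr.symm)
      · exact Or.inl rfl
    have hB1G : ∀ b b' : Bool, B1 b → GG.Reachable (v, b) (v, b') → B1 b' := by
      rintro b b' ⟨b₀, hA0, hL⟩ hr
      refine ⟨b₀, hA0, ?_⟩
      rcases hL with rfl | hCC
      · rcases hcrossG b₀ b' hr with h1 | h1
        · exact Or.inl h1
        · exact Or.inr h1
      · exact Or.inr hCC
    have hB1H : ∀ b b' : Bool, B1 b → HH.Reachable (v, b) (v, b') → B1 b' := by
      rintro b b' ⟨b₀, hA0, hL⟩ hr
      refine ⟨b₀, hA0, ?_⟩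
      rcases hL with rfl | hCC
      · rcases hcrossH b₀ b' hr with h1 | h1
        · exact Or.inl h1
        · exact Or.inr h1
      · exact Or.inr hCC
    have hchain : Relation.ReflTransGen
        (fun p q : V × Bool => GG.Reachable p q ∨ HH.Reachable p q) (x, false) z := by
      rw [SimpleGraph.reachable_iff_reflTransGen] at h
      refine Relation.ReflTransGen.mono ?_ _ _ h
      intro a b hab
      rcases (SimpleGraph.sup_adj _ _ _ _).mp hab with h1 | h1
      · exact Or.inl h1.reachable
      · exact Or.inr h1.reachable
    have hInv : GG.Reachable (x, false) z ∨
        (∃ b, B1 b ∧ HH.Reachable (v, b) z) ∨ (∃ b, B1 b ∧ GG.Reachable (v, b) z) := by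
      clear h hz
      induction hchain with
      | refl => exact Or.inl (SimpleGraph.Reachable.refl _)
      | @tail p q hxp hstep ih =>
        by_cases hpq : p = q
        · rwa [hpq] at ih
        obtain ⟨pu, pb⟩ := p
        rcases ih with h1 | ⟨b, hB, h2⟩ | ⟨b, hB, h3⟩
        · rcases hstep with hs | hs
          · exact Or.inl (h1.trans hs)
          · have hpT : (pu, pb).1 ∈ T := (hHfst _ _ hs hpq).1
            have hpS : (pu, pb).1 ∈ S := by
              by_cases hxe : ((x, false) : V × Bool) = (pu, pb)
              · rw [← hxe]; exact hx
              · exact (hGfst _ _ h1 hxe).2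
            have hpv : pu = v := hmemv pu hpS hpT
            subst hpv
            exact Or.inr (Or.inl ⟨pb, ⟨pb, h1, Or.inl rfl⟩, hs⟩)
        · rcases hstep with hs | hs
          · -- G-step from p, p reached through H
            by_cases hpe : ((v, b) : V × Bool) = (pu, pb)
            · exact Or.inr (Or.inr ⟨b, hB, hpe ▸ hs⟩)
            · have hpT : (pu, pb).1 ∈ T := (hHfst _ _ h2 hpe).2
              have hpS : (pu, pb).1 ∈ S := (hGfst _ _ hs hpq).1
              have hpv : pu = v := hmemv pu hpS hpT
              subst hpv
              exact Or.inr (Or.inr ⟨pb, hB1H b pb hB h2, hs⟩)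
          · exact Or.inr (Or.inl ⟨b, hB, h2.trans hs⟩)
        · rcases hstep with hs | hs
          · exact Or.inr (Or.inr ⟨b, hB, h3.trans hs⟩)
          · by_cases hpe : ((v, b) : V × Bool) = (pu, pb)
            · exact Or.inr (Or.inl ⟨b, hB, hpe ▸ hs⟩)
            · have hpS : (pu, pb).1 ∈ S := (hGfst _ _ h3 hpe).2
              have hpT : (pu, pb).1 ∈ T := (hHfst _ _ hs hpq).1
              have hpv : pu = v := hmemv pu hpS hpT
              subst hpv
              exact Or.inr (Or.inl ⟨pb, hB1G b pb hB h3, hs⟩)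
    rcases hInv with h1 | ⟨b, ⟨b₀, hA0, hL⟩, h2⟩ | ⟨b, hB, h3⟩
    · by_cases hxe : ((x, false) : V × Bool) = z
      · have hxv : x = v := hmemv x hx (by rw [← hxe] at hz; exact hz)
        subst hxv
        exact ⟨false, false, SimpleGraph.Reachable.refl _, Or.inl rfl,
          hxe ▸ SimpleGraph.Reachable.refl _⟩
      · have hzS : z.1 ∈ S := (hGfst _ _ h1 hxe).2
        have hzv : z = (v, z.2) := Prod.ext (hmemv z.1 hzS hz) rfl
        exact ⟨z.2, z.2, hzv ▸ h1, Or.inl rfl, hzv ▸ SimpleGraph.Reachable.refl z⟩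
    · exact ⟨b₀, b, hA0, hL, h2⟩
    · by_cases hpe : ((v, b) : V × Bool) = z
      · obtain ⟨b₀, hA0, hL⟩ := hB
        exact ⟨b₀, b, hA0, hL, hpe ▸ SimpleGraph.Reachable.refl _⟩
      · have hzS : z.1 ∈ S := (hGfst _ _ h3 hpe).2
        have hzv : z = (v, z.2) := Prod.ext (hmemv z.1 hzS hz) rfl
        obtain ⟨b₀, hA0, hL⟩ := hB1G b z.2 hB (hzv ▸ h3)
        exact ⟨b₀, z.2, hA0, hL, hzv ▸ SimpleGraph.Reachable.refl z⟩
  · rintro ⟨b, b', hA0, hL, hH0⟩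
    show (SimpleGraph.fromEdgeSet
      (↑(@Union.union _ (@Finset.instUnion _ iU) KG KH) : Set (Sym2 (V × Bool)))).Reachable _ _
    rw [hunion_graph]
    have mG : GG ≤ GG ⊔ HH := le_sup_left
    have mH : HH ≤ GG ⊔ HH := le_sup_right
    have key : ∀ (b b' : Bool), (GG ⊔ HH).Reachable (v, false) (v, true) →
        (GG ⊔ HH).Reachable (v, b) (v, b') := by
      intro b b' R
      cases b <;> cases b'
      · exact SimpleGraph.Reachable.refl _
      · exact R
      · exact R.symm
      · exact SimpleGraph.Reachable.refl _
    have link : (GG ⊔ HH).Reachable (v, b) (v, b') := by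
      rcases hL with rfl | hCC | hCC
      · exact SimpleGraph.Reachable.refl _
      · exact key b b' (hCC.mono mG)
      · exact key b b' (hCC.mono mH)
    exact ((hA0.mono mG).trans link).trans (hH0.mono mH)

end Conn

end BBAux

namespace BBAux

section Flip2

variable {V : Type*} [Fintype V] {Fbar : SimpleGraph V} {v : V} {T : Set V}
variable {μ : Sym2 (V × Bool) → ℝ}

lemma mu_flip (hsym : IsSymWeight Fbar μ) (e : Sym2 (V × Bool))
    (he : e ∈ (BB Fbar).edgeSet) : μ (flipE e) = μ e := by
  induction e using Sym2.ind with
  | _ p q =>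
    rw [SimpleGraph.mem_edgeSet] at he
    obtain ⟨a, i⟩ := p
    obtain ⟨b, j⟩ := q
    rw [flipE_pair]
    rcases SimpleGraph.boxProd_adj.mp he with ⟨hadj, hij⟩ | ⟨hne, hab⟩
    · simp only at hij
      subst hij
      cases i
      · simp only [flipV, Bool.not_false]
        exact (hsym a b hadj).symm
      · simp only [flipV, Bool.not_true]
        exact hsym a b hadj
    · simp only at hab
      subst hab
      have hij : i ≠ j := by
        intro hij
        subst hij
        exact (SimpleGraph.top_adj _ _).mp hne rfl
      cases i <;> cases j
      · exact absurd rfl hij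
      · simp only [flipV, Bool.not_false, Bool.not_true]; rw [Sym2.eq_swap]
      · simp only [flipV, Bool.not_false, Bool.not_true]; rw [Sym2.eq_swap]
      · exact absurd rfl hij

/-- `flipE` maps the edge set of `H₀` to itself. -/
lemma EH_flip_mem (e : Sym2 (V × Bool)) (he : e ∈ edgeFin (bbSideDel Fbar T v)) :
    flipE e ∈ edgeFin (bbSideDel Fbar T v) := by
  induction e using Sym2.ind with
  | _ p q =>
    rw [edgeFin, Set.mem_toFinset, SimpleGraph.mem_edgeSet] at he
    rw [flipE_pair, edgeFin, Set.mem_toFinset, SimpleGraph.mem_edgeSet]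
    exact (del_adj_flip Fbar T v p q).mpr he

lemma EH_image :
    (edgeFin (bbSideDel Fbar T v)).image flipE = edgeFin (bbSideDel Fbar T v) := by
  apply Finset.eq_of_subset_of_card_le
  · intro e he
    obtain ⟨a, ha, rfl⟩ := Finset.mem_image.mp he
    exact EH_flip_mem a ha
  · rw [Finset.card_image_of_injective _ flipE_inj]

lemma conn_flip (K : Finset (Sym2 (V × Bool))) (p q : V × Bool) :
    ConnIn (K.image flipE) (flipV p) (flipV q) ↔ ConnIn K p q := by
  have hadj : ∀ a b : V × Bool,
      (SimpleGraph.fromEdgeSet (↑(K.image flipE) : Set (Sym2 (V × Bool)))).Adj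
        (flipV a) (flipV b) ↔
      (SimpleGraph.fromEdgeSet (↑K : Set (Sym2 (V × Bool)))).Adj a b := by
    intro a b
    rw [SimpleGraph.fromEdgeSet_adj, SimpleGraph.fromEdgeSet_adj]
    constructor
    · rintro ⟨h1, h2⟩
      refine ⟨?_, fun he => h2 (he ▸ rfl)⟩
      rw [← flipE_pair] at h1
      simp only [Finset.coe_image, Set.mem_image, Finset.mem_coe] at h1
      obtain ⟨e, he, hee⟩ := h1
      rwa [← flipE_inj hee]
    · rintro ⟨h1, h2⟩
      refine ⟨?_, fun he => h2 (flipV_inj he)⟩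
      rw [← flipE_pair]
      simp only [Finset.coe_image, Set.mem_image, Finset.mem_coe]
      exact ⟨s(a, b), h1, rfl⟩
  let φ : SimpleGraph.fromEdgeSet (↑K : Set (Sym2 (V × Bool))) ≃g
      SimpleGraph.fromEdgeSet (↑(K.image flipE) : Set (Sym2 (V × Bool))) :=
    { toFun := flipV, invFun := flipV, left_inv := flipV_invol, right_inv := flipV_invol,
      map_rel_iff' := by intro a b; exact hadj a b }
  exact SimpleGraph.Iso.reachable_iff (φ := φ)

lemma wH_flip (hsym : IsSymWeight Fbar μ)
    (hEH : edgeFin (bbSideDel Fbar T v) ⊆ edgeFin (BB Fbar))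
    (K : Finset (Sym2 (V × Bool))) (hK : K ⊆ edgeFin (bbSideDel Fbar T v)) :
    percWeight (bbSideDel Fbar T v) μ (K.image flipE) =
      percWeight (bbSideDel Fbar T v) μ K := by
  have hmu : ∀ e ∈ edgeFin (bbSideDel Fbar T v), μ (flipE e) = μ e := by
    intro e he
    have := hEH he
    rw [edgeFin, Set.mem_toFinset] at this
    exact mu_flip hsym e this
  rw [percWeight, percWeight]
  congr 1
  · rw [Finset.prod_image (fun a _ b _ h => flipE_inj h)]
    exact Finset.prod_congr rfl fun e he => hmu e (hK he)
  · refine Finset.prod_nbij' (i := flipE) (j := flipE) ?_ ?_ ?_ ?_ ?_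
    · intro e he
      have he' := mem_sdiff'.mp he
      refine mem_sdiff'.mpr ⟨EH_flip_mem e he'.1, fun hmem => he'.2 ?_⟩
      rw [← flipE_invol e]
      exact Finset.mem_image_of_mem _ hmem
    · intro e he
      have he' := mem_sdiff'.mp he
      refine mem_sdiff'.mpr ⟨EH_flip_mem e he'.1, fun hmem => ?_⟩
      obtain ⟨b, hb, hbe⟩ := Finset.mem_image.mp hmem
      exact he'.2 (by rwa [← flipE_inj hbe])
    · intro e _; exact flipE_invol e
    · intro e _; exact flipE_invol e
    · intro e he
      have he' := mem_sdiff'.mp he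
      rw [hmu e he'.1]

lemma sum_flip (f : Finset (Sym2 (V × Bool)) → ℝ) :
    ∑ K ∈ (edgeFin (bbSideDel Fbar T v)).powerset, f K =
      ∑ K ∈ (edgeFin (bbSideDel Fbar T v)).powerset, f (K.image flipE) := by
  refine Finset.sum_nbij' (i := fun K => K.image flipE) (j := fun K => K.image flipE)
    ?_ ?_ ?_ ?_ ?_
  · intro K hK
    rw [Finset.mem_powerset] at hK ⊢
    exact (Finset.image_subset_image hK).trans (le_of_eq EH_image)
  · intro K hK
    rw [Finset.mem_powerset] at hK ⊢
    exact (Finset.image_subset_image hK).trans (le_of_eq EH_image)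
  · intro K _
    simp only [Finset.image_image]
    rw [show flipE ∘ flipE = id from funext flipE_invol, Finset.image_id]
  · intro K _
    simp only [Finset.image_image]
    rw [show flipE ∘ flipE = id from funext flipE_invol, Finset.image_id]
  · intro K hK
    simp only [Finset.image_image]
    rw [show flipE ∘ flipE = id from funext flipE_invol, Finset.image_id]

end Flip2

end BBAux

namespace BBAux

lemma prod_sdiff_split {α M : Type*} [CommMonoid M] {i1 i2 i3 : DecidableEq α}
    (E EA EB KA KB : Finset α)
    (hE : E = @Union.union _ (@Finset.instUnion _ i3) EA EB)
    (hAB : Disjoint EA EB) (hKA : KA ⊆ EA) (hKB : KB ⊆ EB) (f : α → M) :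
    (∏ e ∈ @SDiff.sdiff _ (@Finset.instSDiff _ i1) E
        (@Union.union _ (@Finset.instUnion _ i2) KA KB), f e) =
      (∏ e ∈ @SDiff.sdiff _ (@Finset.instSDiff _ i1) EA KA, f e) *
        (∏ e ∈ @SDiff.sdiff _ (@Finset.instSDiff _ i1) EB KB, f e) := by
  rw [Subsingleton.elim i2 i1]
  rw [Subsingleton.elim i3 i1] at hE
  letI := i1
  subst hE
  rw [← Finset.prod_union (hAB.mono Finset.sdiff_subset Finset.sdiff_subset)]
  congr 1
  ext e
  simp only [Finset.mem_sdiff, Finset.mem_union, not_or]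
  constructor
  · rintro ⟨h1, h2, h3⟩
    rcases h1 with h | h
    · exact Or.inl ⟨h, h2⟩
    · exact Or.inr ⟨h, h3⟩
  · rintro (⟨h1, h2⟩ | ⟨h1, h2⟩)
    · exact ⟨Or.inl h1, h2, fun hk => Finset.disjoint_left.mp hAB h1 (hKB hk)⟩
    · exact ⟨Or.inr h1, fun hk => Finset.disjoint_left.mp hAB (hKA hk) h1, h2⟩

lemma prod_union_inst {α M : Type*} [CommMonoid M] {i : DecidableEq α}
    {s t : Finset α} (h : Disjoint s t) (f : α → M) :
    (∏ e ∈ @Union.union _ (@Finset.instUnion _ i) s t, f e) =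
      (∏ e ∈ s, f e) * ∏ e ∈ t, f e := by
  letI := i
  exact Finset.prod_union h

lemma percWeight_split {W : Type*} [Fintype W] (F' G' H' : SimpleGraph W) (μ : Sym2 W → ℝ)
    {i1 i2 : DecidableEq (Sym2 W)}
    (hsplit : edgeFin F' =
      @Union.union _ (@Finset.instUnion _ i1) (edgeFin G') (edgeFin H'))
    (hdisj : Disjoint (edgeFin G') (edgeFin H'))
    (KG KH : Finset (Sym2 W)) (hKG : KG ⊆ edgeFin G') (hKH : KH ⊆ edgeFin H') :
    percWeight F' μ (@Union.union _ (@Finset.instUnion _ i2) KG KH) =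
      percWeight G' μ KG * percWeight H' μ KH := by
  rw [percWeight, percWeight, percWeight,
    prod_union_inst (hdisj.mono hKG hKH) μ,
    prod_sdiff_split (edgeFin F') (edgeFin G') (edgeFin H') KG KH hsplit hdisj hKG hKH]
  ring

section EdgeSplit

variable {V : Type*} [Fintype V] {Fbar : SimpleGraph V} {v : V} {S T : Set V}
variable (hST : S ∩ T = {v}) (hUnion : S ∪ T = Set.univ)
variable (hSep : ∀ x ∈ S, ∀ y ∈ T, Fbar.Adj x y → x = v ∨ y = v)

include hST hUnion hSep in
lemma edgeFin_split {i : DecidableEq (Sym2 (V × Bool))} :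
    edgeFin (BB Fbar) = @Union.union _ (@Finset.instUnion _ i)
      (edgeFin (bbSide Fbar S)) (edgeFin (bbSideDel Fbar T v)) := by
  ext e
  induction e using Sym2.ind with
  | _ p q =>
    rw [@Finset.mem_union _ i, edgeFin, edgeFin, edgeFin, Set.mem_toFinset, Set.mem_toFinset,
      Set.mem_toFinset, SimpleGraph.mem_edgeSet, SimpleGraph.mem_edgeSet,
      SimpleGraph.mem_edgeSet]
    exact bb_adj_split hST hUnion hSep p q

include hST in
lemma edgeFin_disj :
    Disjoint (edgeFin (bbSide Fbar S)) (edgeFin (bbSideDel Fbar T v)) := by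
  rw [Finset.disjoint_left]
  intro e heG heH
  induction e using Sym2.ind with
  | _ p q =>
    rw [edgeFin, Set.mem_toFinset, SimpleGraph.mem_edgeSet] at heG heH
    exact bb_adj_not_both hST p q ⟨heG, heH⟩

end EdgeSplit

end BBAux

/-- The difference of the two connection probabilities factors as a product of the
corresponding differences on the two sides of the cut vertex. -/
theorem conn_prob_diff_factors {V : Type*} [Fintype V]
    (Fbar : SimpleGraph V) (v : V) (S T : Set V)
    (hcut : IsCutVertex Fbar v)
    (hST : S ∩ T = {v}) (hUnion : S ∪ T = Set.univ)
    (hSep : ∀ x ∈ S, ∀ y ∈ T, Fbar.Adj x y → x = v ∨ y = v)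
    (μ : Sym2 (V × Bool) → ℝ) (hμ : IsWeight (BB Fbar) μ) (hsym : IsSymWeight Fbar μ)
    (x y : V) (hx : x ∈ S) (hy : y ∈ T) :
    percProb (BB Fbar) μ (fun K => ConnIn K (x, false) (y, false)) -
        percProb (BB Fbar) μ (fun K => ConnIn K (x, false) (y, true)) =
      (percProb (bbSideDel Fbar T v) μ (fun K => ConnIn K (v, false) (y, false)) -
          percProb (bbSideDel Fbar T v) μ (fun K => ConnIn K (v, false) (y, true))) *
        (percProb (bbSide Fbar S) μ (fun K => ConnIn K (x, false) (v, false)) -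
          percProb (bbSide Fbar S) μ (fun K => ConnIn K (x, false) (v, true))) := by
  have hsplit : edgeFin (BB Fbar) =
      edgeFin (bbSide Fbar S) ∪ edgeFin (bbSideDel Fbar T v) :=
    BBAux.edgeFin_split hST hUnion hSep
  have hdisj := BBAux.edgeFin_disj (Fbar := Fbar) (v := v) (S := S) (T := T) hST
  set EG := edgeFin (bbSide Fbar S) with hEGdef
  set EH := edgeFin (bbSideDel Fbar T v) with hEHdef
  set wG : Finset (Sym2 (V × Bool)) → ℝ := percWeight (bbSide Fbar S) μ with hwGdef
  set wH : Finset (Sym2 (V × Bool)) → ℝ := percWeight (bbSideDel Fbar T v) μ with hwHdef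
  have hEHsub : EH ⊆ edgeFin (BB Fbar) := by
    rw [hsplit]; exact Finset.subset_union_right
  -- factorization of the percolation sum over the two halves
  have hprob : ∀ A : Finset (Sym2 (V × Bool)) → Prop,
      percProb (BB Fbar) μ A =
        ∑ KG ∈ EG.powerset, ∑ KH ∈ EH.powerset,
          (if A (KG ∪ KH) then wG KG * wH KH else 0) := by
    intro A
    rw [percProb, hsplit, sum_powerset_union_disj _ _ hdisj]
    refine Finset.sum_congr rfl fun KG hKG => Finset.sum_congr rfl fun KH hKH => ?_
    rw [Finset.mem_powerset] at hKG hKH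
    by_cases hA : A (KG ∪ KH)
    · rw [if_pos hA, if_pos hA,
        BBAux.percWeight_split (BB Fbar) (bbSide Fbar S) (bbSideDel Fbar T v) μ hsplit hdisj
          KG KH hKG hKH]
    · rw [if_neg hA, if_neg hA]
  -- symmetry of the H-side sums under the level flip
  have hqflip : ∀ b ε : Bool,
      (∑ KH ∈ EH.powerset, if ConnIn KH (v, b) (y, ε) then wH KH else 0) =
      (∑ KH ∈ EH.powerset, if ConnIn KH (v, !b) (y, !ε) then wH KH else 0) := by
    intro b ε
    rw [BBAux.sum_flip (f := fun K => if ConnIn K (v, b) (y, ε) then wH K else 0)]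
    refine Finset.sum_congr rfl fun K hK => ?_
    rw [Finset.mem_powerset] at hK
    have hcw : wH (K.image BBAux.flipE) = wH K := BBAux.wH_flip hsym hEHsub K hK
    have hfv : BBAux.flipV ((v, !b) : V × Bool) = (v, b) := by simp [BBAux.flipV]
    have hfy : BBAux.flipV ((y, !ε) : V × Bool) = (y, ε) := by simp [BBAux.flipV]
    have hcon : ConnIn (K.image BBAux.flipE) (v, b) (y, ε) ↔ ConnIn K (v, !b) (y, !ε) := by
      rw [← hfv, ← hfy]
      exact BBAux.conn_flip K (v, !b) (y, !ε)
    exact if_congr hcon hcw rfl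
  have hrflip :
      (∑ KH ∈ EH.powerset, if (ConnIn KH (v, false) (y, false) ∨
          ConnIn KH (v, true) (y, false)) then wH KH else 0) =
      (∑ KH ∈ EH.powerset, if (ConnIn KH (v, false) (y, true) ∨
          ConnIn KH (v, true) (y, true)) then wH KH else 0) := by
    rw [BBAux.sum_flip (f := fun K => if (ConnIn K (v, false) (y, false) ∨
        ConnIn K (v, true) (y, false)) then wH K else 0)]
    refine Finset.sum_congr rfl fun K hK => ?_
    rw [Finset.mem_powerset] at hK
    have hcw : wH (K.image BBAux.flipE) = wH K := BBAux.wH_flip hsym hEHsub K hK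
    have h1 : ConnIn (K.image BBAux.flipE) (v, false) (y, false) ↔
        ConnIn K (v, true) (y, true) := by
      have hfv : BBAux.flipV ((v, true) : V × Bool) = (v, false) := by simp [BBAux.flipV]
      have hfy : BBAux.flipV ((y, true) : V × Bool) = (y, false) := by simp [BBAux.flipV]
      rw [← hfv, ← hfy]
      exact BBAux.conn_flip K _ _
    have h2 : ConnIn (K.image BBAux.flipE) (v, true) (y, false) ↔
        ConnIn K (v, false) (y, true) := by
      have hfv : BBAux.flipV ((v, false) : V × Bool) = (v, true) := by simp [BBAux.flipV]
      have hfy : BBAux.flipV ((y, true) : V × Bool) = (y, false) := by simp [BBAux.flipV]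
      rw [← hfv, ← hfy]
      exact BBAux.conn_flip K _ _
    refine if_congr ?_ hcw rfl
    rw [h1, h2]
    exact or_comm
  -- the decomposition of connectivity across the cut
  have hdec : ∀ (KG KH : Finset (Sym2 (V × Bool))), KG ⊆ EG → KH ⊆ EH → ∀ ε : Bool,
      (ConnIn (KG ∪ KH) (x, false) (y, ε) ↔
        ∃ b b' : Bool, ConnIn KG (x, false) (v, b) ∧
          (b = b' ∨ ConnIn KG (v, false) (v, true) ∨ ConnIn KH (v, false) (v, true)) ∧
          ConnIn KH (v, b') (y, ε)) :=
    fun KG KH hKG hKH ε => BBAux.conn_decomp hST KG KH hKG hKH x hx ((y, ε)) hy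
  -- the two H-side quantities
  set D0 : ℝ := ∑ KH ∈ EH.powerset, if ConnIn KH (v, false) (y, false) then wH KH else 0
    with hD0def
  set D1 : ℝ := ∑ KH ∈ EH.powerset, if ConnIn KH (v, false) (y, true) then wH KH else 0
    with hD1def
  have hq10 : (∑ KH ∈ EH.powerset, if ConnIn KH (v, true) (y, false) then wH KH else 0)
      = D1 := by
    have h := hqflip true false
    simp only [Bool.not_true, Bool.not_false] at h
    rw [hD1def]
    exact h
  have hq11 : (∑ KH ∈ EH.powerset, if ConnIn KH (v, true) (y, true) then wH KH else 0)
      = D0 := by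
    have h := hqflip true true
    simp only [Bool.not_true, Bool.not_false] at h
    rw [hD0def]
    exact h
  -- the inner (per-`KG`) identity
  have hinner : ∀ KG, KG ⊆ EG →
      ((∑ KH ∈ EH.powerset, if ConnIn (KG ∪ KH) (x, false) (y, false) then wH KH else 0) -
        (∑ KH ∈ EH.powerset, if ConnIn (KG ∪ KH) (x, false) (y, true) then wH KH else 0)) =
      ((if ConnIn KG (x, false) (v, false) then (1 : ℝ) else 0) -
        (if ConnIn KG (x, false) (v, true) then (1 : ℝ) else 0)) * (D0 - D1) := by
    intro KG hKG
    by_cases hA0 : ConnIn KG (x, false) (v, false) <;>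
      by_cases hA1 : ConnIn KG (x, false) (v, true)
    · -- x⁻ reaches both v⁻ and v⁺ in KG
      have hev : ∀ (ε : Bool) (KH : Finset (Sym2 (V × Bool))), KH ⊆ EH →
          (ConnIn (KG ∪ KH) (x, false) (y, ε) ↔
            (ConnIn KH (v, false) (y, ε) ∨ ConnIn KH (v, true) (y, ε))) := by
        intro ε KH hKH
        rw [hdec KG KH hKG hKH ε]
        constructor
        · rintro ⟨b, b', -, -, h3⟩
          cases b'
          · exact Or.inl h3
          · exact Or.inr h3
        · rintro (h | h)
          · exact ⟨false, false, hA0, Or.inl rfl, h⟩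
          · exact ⟨true, true, hA1, Or.inl rfl, h⟩
      have e0 : (∑ KH ∈ EH.powerset,
          if ConnIn (KG ∪ KH) (x, false) (y, false) then wH KH else 0) =
          ∑ KH ∈ EH.powerset, if (ConnIn KH (v, false) (y, false) ∨ ConnIn KH (v, true) (y, false)) then wH KH else 0 :=
        Finset.sum_congr rfl fun KH hKH =>
          if_congr (hev false KH (Finset.mem_powerset.mp hKH)) rfl rfl
      have e1 : (∑ KH ∈ EH.powerset,
          if ConnIn (KG ∪ KH) (x, false) (y, true) then wH KH else 0) =
          ∑ KH ∈ EH.powerset, if (ConnIn KH (v, false) (y, true) ∨ ConnIn KH (v, true) (y, true)) then wH KH else 0 :=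
        Finset.sum_congr rfl fun KH hKH =>
          if_congr (hev true KH (Finset.mem_powerset.mp hKH)) rfl rfl
      rw [e0, e1, hrflip, if_pos hA0, if_pos hA1]
      ring
    · -- x⁻ reaches v⁻ but not v⁺
      have hev : ∀ (ε : Bool) (KH : Finset (Sym2 (V × Bool))), KH ⊆ EH →
          (ConnIn (KG ∪ KH) (x, false) (y, ε) ↔ ConnIn KH (v, false) (y, ε)) := by
        intro ε KH hKH
        rw [hdec KG KH hKG hKH ε]
        constructor
        · rintro ⟨b, b', h1, h2, h3⟩
          have hb : b = false := by
            cases b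
            · rfl
            · exact absurd h1 hA1
          subst hb
          rcases h2 with rfl | hC | hC
          · exact h3
          · exact absurd (h1.trans hC) hA1
          · cases b'
            · exact h3
            · exact hC.trans h3
        · intro h
          exact ⟨false, false, hA0, Or.inl rfl, h⟩
      have e0 : (∑ KH ∈ EH.powerset,
          if ConnIn (KG ∪ KH) (x, false) (y, false) then wH KH else 0) =
          ∑ KH ∈ EH.powerset, if ConnIn KH (v, false) (y, false) then wH KH else 0 :=
        Finset.sum_congr rfl fun KH hKH =>
          if_congr (hev false KH (Finset.mem_powerset.mp hKH)) rfl rfl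
      have e1 : (∑ KH ∈ EH.powerset,
          if ConnIn (KG ∪ KH) (x, false) (y, true) then wH KH else 0) =
          ∑ KH ∈ EH.powerset, if ConnIn KH (v, false) (y, true) then wH KH else 0 :=
        Finset.sum_congr rfl fun KH hKH =>
          if_congr (hev true KH (Finset.mem_powerset.mp hKH)) rfl rfl
      rw [e0, e1, if_pos hA0, if_neg hA1, ← hD0def, ← hD1def]
      ring
    · -- x⁻ reaches v⁺ but not v⁻
      have hev : ∀ (ε : Bool) (KH : Finset (Sym2 (V × Bool))), KH ⊆ EH →
          (ConnIn (KG ∪ KH) (x, false) (y, ε) ↔ ConnIn KH (v, true) (y, ε)) := by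
        intro ε KH hKH
        rw [hdec KG KH hKG hKH ε]
        constructor
        · rintro ⟨b, b', h1, h2, h3⟩
          have hb : b = true := by
            cases b
            · exact absurd h1 hA0
            · rfl
          subst hb
          rcases h2 with rfl | hC | hC
          · exact h3
          · exact absurd (h1.trans hC.symm) hA0
          · cases b'
            · exact hC.symm.trans h3
            · exact h3
        · intro h
          exact ⟨true, true, hA1, Or.inl rfl, h⟩
      have e0 : (∑ KH ∈ EH.powerset,
          if ConnIn (KG ∪ KH) (x, false) (y, false) then wH KH else 0) =
          ∑ KH ∈ EH.powerset, if ConnIn KH (v, true) (y, false) then wH KH else 0 :=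
        Finset.sum_congr rfl fun KH hKH =>
          if_congr (hev false KH (Finset.mem_powerset.mp hKH)) rfl rfl
      have e1 : (∑ KH ∈ EH.powerset,
          if ConnIn (KG ∪ KH) (x, false) (y, true) then wH KH else 0) =
          ∑ KH ∈ EH.powerset, if ConnIn KH (v, true) (y, true) then wH KH else 0 :=
        Finset.sum_congr rfl fun KH hKH =>
          if_congr (hev true KH (Finset.mem_powerset.mp hKH)) rfl rfl
      rw [e0, e1, hq10, hq11, if_neg hA0, if_pos hA1]
      ring
    · -- x⁻ reaches neither
      have hev : ∀ (ε : Bool) (KH : Finset (Sym2 (V × Bool))), KH ⊆ EH →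
          ¬ConnIn (KG ∪ KH) (x, false) (y, ε) := by
        intro ε KH hKH h
        obtain ⟨b, b', h1, -, -⟩ := (hdec KG KH hKG hKH ε).mp h
        cases b
        · exact hA0 h1
        · exact hA1 h1
      have e0 : (∑ KH ∈ EH.powerset,
          if ConnIn (KG ∪ KH) (x, false) (y, false) then wH KH else 0) = 0 :=
        Finset.sum_eq_zero fun KH hKH =>
          if_neg (hev false KH (Finset.mem_powerset.mp hKH))
      have e1 : (∑ KH ∈ EH.powerset,
          if ConnIn (KG ∪ KH) (x, false) (y, true) then wH KH else 0) = 0 :=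
        Finset.sum_eq_zero fun KH hKH =>
          if_neg (hev true KH (Finset.mem_powerset.mp hKH))
      rw [e0, e1, if_neg hA0, if_neg hA1]
      simp
  -- put everything together
  have hL : percProb (BB Fbar) μ (fun K => ConnIn K (x, false) (y, false)) -
      percProb (BB Fbar) μ (fun K => ConnIn K (x, false) (y, true)) =
      ∑ KG ∈ EG.powerset, wG KG *
        (((if ConnIn KG (x, false) (v, false) then (1 : ℝ) else 0) -
          (if ConnIn KG (x, false) (v, true) then (1 : ℝ) else 0)) * (D0 - D1)) := by
    rw [hprob, hprob, ← Finset.sum_sub_distrib]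
    refine Finset.sum_congr rfl fun KG hKG => ?_
    rw [Finset.mem_powerset] at hKG
    have e1 : ∀ ε : Bool,
        (∑ KH ∈ EH.powerset,
          if ConnIn (KG ∪ KH) (x, false) (y, ε) then wG KG * wH KH else 0) =
        wG KG * ∑ KH ∈ EH.powerset,
          (if ConnIn (KG ∪ KH) (x, false) (y, ε) then wH KH else 0) := by
      intro ε
      rw [Finset.mul_sum]
      refine Finset.sum_congr rfl fun KH _ => ?_
      split_ifs <;> ring
    rw [e1 false, e1 true, ← mul_sub, hinner KG hKG]
  have hg : ∀ b : Bool, percProb (bbSide Fbar S) μ (fun K => ConnIn K (x, false) (v, b)) =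
      ∑ KG ∈ EG.powerset, (if ConnIn KG (x, false) (v, b) then wG KG else 0) := fun _ => rfl
  have h0 : percProb (bbSideDel Fbar T v) μ (fun K => ConnIn K (v, false) (y, false)) = D0 :=
    rfl
  have h1 : percProb (bbSideDel Fbar T v) μ (fun K => ConnIn K (v, false) (y, true)) = D1 :=
    rfl
  have hR : (percProb (bbSideDel Fbar T v) μ (fun K => ConnIn K (v, false) (y, false)) -
        percProb (bbSideDel Fbar T v) μ (fun K => ConnIn K (v, false) (y, true))) *
      (percProb (bbSide Fbar S) μ (fun K => ConnIn K (x, false) (v, false)) -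
        percProb (bbSide Fbar S) μ (fun K => ConnIn K (x, false) (v, true))) =
      ∑ KG ∈ EG.powerset, wG KG *
        (((if ConnIn KG (x, false) (v, false) then (1 : ℝ) else 0) -
          (if ConnIn KG (x, false) (v, true) then (1 : ℝ) else 0)) * (D0 - D1)) := by
    have hgs : (∑ KG ∈ EG.powerset, if ConnIn KG (x, false) (v, false) then wG KG else 0) -
        (∑ KG ∈ EG.powerset, if ConnIn KG (x, false) (v, true) then wG KG else 0) =
        ∑ KG ∈ EG.powerset, ((if ConnIn KG (x, false) (v, false) then wG KG else 0) -
          (if ConnIn KG (x, false) (v, true) then wG KG else 0)) :=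
      (Finset.sum_sub_distrib _ _).symm
    rw [h0, h1, hg false, hg true, hgs, Finset.mul_sum]
    refine Finset.sum_congr rfl fun KG _ => ?_
    split_ifs <;> ring
  rw [hL, hR]
end

section
/- In the cut-vertex setup, let μ be a weight on F and let x, y ∈ V(H). The event (x ∼_F y) is the disjoint union of the three events A₁ = {K ⊆ E(F) : x and y are joined in K ∩ E(H₀)}, A₂ = {K ⊆ E(F) : x and y are not joined in K ∩ E(H₀), x and v⁻ are joined in K ∩ E(H₀), y and v⁺ are joined in K ∩ E(H₀), and v⁻ and v⁺ are joined in K ∩ E(G)}, and A₃ = {K ⊆ E(F) : x and y are not joined in K ∩ E(H₀), x and v⁺ are joined in K ∩ E(H₀), y and v⁻ are joined in K ∩ E(H₀), and v⁻ and v⁺ are joined in K ∩ E(G)}; in particular A₂ ∩ A₃ = ∅ and P_{F,μ}(x ∼_F y) = P_{F,μ}(A₁) + P_{F,μ}(A₂) + P_{F,μ}(A₃). -/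
open Classical

lemma mem_edgeFin {V : Type*} [Fintype V] {G : SimpleGraph V} {a b : V} :
    s(a,b) ∈ edgeFin G ↔ G.Adj a b := by
  simp [edgeFin, SimpleGraph.mem_edgeSet]

lemma connIn_mono {V : Type*} {K L : Finset (Sym2 V)} (h : K ⊆ L) {x y : V}
    (r : ConnIn K x y) : ConnIn L x y :=
  r.mono (SimpleGraph.fromEdgeSet_mono (by exact_mod_cast h))

lemma edge_class {V : Type*} [Fintype V] {Fbar : SimpleGraph V} {v : V} {S T : Set V}
    (hST : S ∩ T = {v}) (hUnion : S ∪ T = Set.univ)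
    (hSep : ∀ x ∈ S, ∀ y ∈ T, Fbar.Adj x y → x = v ∨ y = v)
    {a c : V × Bool} (h : (BB Fbar).Adj a c) :
    (bbSideDel Fbar T v).Adj a c ∨ (bbSide Fbar S).Adj a c := by
  have vS : v ∈ S := by
    have : v ∈ S ∩ T := hST ▸ rfl
    exact this.1
  have vT : v ∈ T := by
    have : v ∈ S ∩ T := hST ▸ rfl
    exact this.2
  have hmem : ∀ w : V, w ∈ S ∨ w ∈ T := by
    intro w
    have : w ∈ S ∪ T := hUnion ▸ Set.mem_univ w
    exact this
  rcases (SimpleGraph.boxProd_adj).1 h with ⟨hadj, heq⟩ | ⟨_, heq⟩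
  · -- horizontal edge
    by_cases haT : a.1 ∈ T ∧ c.1 ∈ T
    · left
      show ((bbSide Fbar T).deleteEdges _).Adj a c
      rw [SimpleGraph.deleteEdges_adj]
      refine ⟨⟨h, haT.1, haT.2⟩, ?_⟩
      intro hc
      rw [Set.mem_singleton_iff, Sym2.eq_iff] at hc
      rcases hc with ⟨h1, h2⟩ | ⟨h1, h2⟩ <;>
        · have e1 := congrArg Prod.snd h1
          have e2 := congrArg Prod.snd h2
          simp only at e1 e2
          rw [e1, e2] at heq
          simp at heq
    · right
      -- one of a.1, c.1 not in T, hence in S; then the other is in S too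
      have key : a.1 ∈ S ∧ c.1 ∈ S := by
        rcases not_and_or.1 haT with hnT | hnT
        · have haS : a.1 ∈ S := (hmem a.1).resolve_right hnT
          refine ⟨haS, ?_⟩
          rcases hmem c.1 with hcS | hcT
          · exact hcS
          · rcases hSep a.1 haS c.1 hcT hadj with h1 | h1
            · exact absurd (h1 ▸ vT) hnT
            · exact h1 ▸ vS
        · have hcS : c.1 ∈ S := (hmem c.1).resolve_right hnT
          refine ⟨?_, hcS⟩
          rcases hmem a.1 with haS | haT'
          · exact haS
          · rcases hSep c.1 hcS a.1 haT' hadj.symm with h1 | h1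
            · exact absurd (h1 ▸ vT) hnT
            · exact h1 ▸ vS
      exact ⟨h, key.1, key.2⟩
  · -- vertical edge
    by_cases haS : a.1 ∈ S
    · right
      exact ⟨h, haS, show c.1 ∈ S from heq ▸ haS⟩
    · left
      have haT : a.1 ∈ T := (hmem a.1).resolve_left haS
      have hav : a.1 ≠ v := fun hh => haS (hh ▸ vS)
      show ((bbSide Fbar T).deleteEdges _).Adj a c
      rw [SimpleGraph.deleteEdges_adj]
      refine ⟨⟨h, haT, show c.1 ∈ T from heq ▸ haT⟩, ?_⟩
      intro hc
      rw [Set.mem_singleton_iff, Sym2.eq_iff] at hc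
      rcases hc with ⟨h1, -⟩ | ⟨h1, -⟩ <;> exact hav (congrArg Prod.fst h1)

lemma crossing {V : Type*} [Fintype V] {Fbar : SimpleGraph V} {v : V} {S T : Set V}
    (hST : S ∩ T = {v}) (hUnion : S ∪ T = Set.univ)
    (hSep : ∀ x ∈ S, ∀ y ∈ T, Fbar.Adj x y → x = v ∨ y = v)
    {K : Finset (Sym2 (V × Bool))} (hK : K ⊆ edgeFin (BB Fbar))
    {x y : V × Bool} (hx : x.1 ∈ T) (hy : y.1 ∈ T)
    (h : ConnIn K x y) :
    ConnIn (K ∩ edgeFin (bbSideDel Fbar T v)) x y ∨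
      (ConnIn (K ∩ edgeFin (bbSide Fbar S)) (v, false) (v, true) ∧
        ∃ ε : Bool, ConnIn (K ∩ edgeFin (bbSideDel Fbar T v)) x (v, ε) ∧
          ConnIn (K ∩ edgeFin (bbSideDel Fbar T v)) y (v, !ε)) := by
  classical
  set EH := K ∩ edgeFin (bbSideDel Fbar T v) with hEHdef
  set EG := K ∩ edgeFin (bbSide Fbar S) with hEGdef
  -- R' a b is the target relation
  let R' : (V × Bool) → (V × Bool) → Prop := fun a b =>
    ConnIn EH a b ∨ (ConnIn EG (v, false) (v, true) ∧
      ∃ ε : Bool, ConnIn EH a (v, ε) ∧ ConnIn EH b (v, !ε))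
  have hHrefl : ∀ a : V × Bool, ConnIn EH a a := fun a => SimpleGraph.Reachable.refl a
  have hGrefl : ∀ a : V × Bool, ConnIn EG a a := fun a => SimpleGraph.Reachable.refl a
  have toGvv : ∀ α β : Bool, α ≠ β → ConnIn EG (v, α) (v, β) →
      ConnIn EG (v, false) (v, true) := by
    intro α β hne hc
    cases α <;> cases β <;> simp_all <;> exact hc.symm
  have hAll : ConnIn EH (v, false) (v, true) → ∀ α β : Bool, ConnIn EH (v, α) (v, β) := by
    intro hvv α β
    cases α <;> cases β
    · exact hHrefl _
    · exact hvv
    · exact hvv.symm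
    · exact hHrefl _
  have bridge : ∀ (ε δ : Bool) (b : V × Bool),
      ConnIn EG (v, false) (v, true) → R' (v, ε) b → R' (v, δ) b := by
    intro ε δ b hG hR
    by_cases hδε : δ = ε
    · subst hδε; exact hR
    · have hbd : (!δ) = ε := by cases ε <;> cases δ <;> simp_all
      rcases hR with hR | ⟨-, γ, h1, h2⟩
      · right
        exact ⟨hG, δ, hHrefl _, by rw [hbd]; exact hR.symm⟩
      · by_cases hγ : γ = ε
        · subst hγ
          by_cases hδγ : δ = !γ
          · left
            rw [hδγ]
            exact h2.symm
          · exact absurd (by cases γ <;> cases δ <;> simp_all) hδγ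
        · have hvv : ConnIn EH (v, false) (v, true) := by
            have : γ = !ε := by cases ε <;> cases γ <;> simp_all
            subst this
            cases ε
            · exact h1
            · exact h1.symm
          left
          exact (hAll hvv δ (!γ)).trans h2.symm
  -- main induction on walks
  have main : ∀ {a b : V × Bool} (_ : (SimpleGraph.fromEdgeSet (↑K : Set (Sym2 (V × Bool)))).Walk a b),
      b.1 ∈ T → ((a.1 ∈ T → R' a b) ∧
        (a.1 ∈ S → ∃ ε : Bool, ConnIn EG a (v, ε) ∧ R' (v, ε) b)) := by
    intro a b W
    induction W with
    | nil =>
      intro hbT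
      constructor
      · intro _
        left; exact hHrefl _
      · rename_i b'
        intro hbS
        have hbv : b'.1 = v := by
          have : b'.1 ∈ S ∩ T := ⟨hbS, hbT⟩
          rw [hST] at this; exact this
        have hbeq : b' = (v, b'.2) := Prod.ext hbv rfl
        refine ⟨b'.2, ?_, ?_⟩
        · rw [← hbeq]; exact hGrefl _
        · rw [← hbeq]; left; exact hHrefl _
    | cons h' W ih =>
      rename_i a' c' b'
      intro hbT
      have hK' : s(a', c') ∈ K := ((SimpleGraph.fromEdgeSet_adj _).1 h').1
      have hne : a' ≠ c' := h'.ne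
      have hBB : (BB Fbar).Adj a' c' := mem_edgeFin.1 (hK hK')
      rcases edge_class hST hUnion hSep hBB with hH | hG
      · -- edge lies in H₀
        have heH : s(a', c') ∈ EH :=
          Finset.mem_inter.2 ⟨hK', mem_edgeFin.2 hH⟩
        have hac : ConnIn EH a' c' :=
          SimpleGraph.Adj.reachable ((SimpleGraph.fromEdgeSet_adj _).2 ⟨by exact_mod_cast heH, hne⟩)
        have hres := SimpleGraph.deleteEdges_adj.mp hH
        have haT : a'.1 ∈ T := hres.1.2.1
        have hcT : c'.1 ∈ T := hres.1.2.2
        have hRab : R' a' b' := by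
          rcases (ih hbT).1 hcT with hcb | ⟨hGvv, ε, h1, h2⟩
          · left; exact hac.trans hcb
          · right; exact ⟨hGvv, ε, hac.trans h1, h2⟩
        constructor
        · intro _; exact hRab
        · intro haS
          have hav : a'.1 = v := by
            have : a'.1 ∈ S ∩ T := ⟨haS, haT⟩
            rw [hST] at this; exact this
          have haeq : a' = (v, a'.2) := Prod.ext hav rfl
          refine ⟨a'.2, ?_, ?_⟩
          · rw [← haeq]; exact hGrefl _
          · rw [← haeq]; exact hRab
      · -- edge lies in G
        have heG : s(a', c') ∈ EG :=
          Finset.mem_inter.2 ⟨hK', mem_edgeFin.2 hG⟩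
        have hacG : ConnIn EG a' c' :=
          SimpleGraph.Adj.reachable ((SimpleGraph.fromEdgeSet_adj _).2 ⟨by exact_mod_cast heG, hne⟩)
        have haS : a'.1 ∈ S := hG.2.1
        have hcS : c'.1 ∈ S := hG.2.2
        rcases (ih hbT).2 hcS with ⟨ε, hcv, hR⟩
        have hav' : ConnIn EG a' (v, ε) := hacG.trans hcv
        constructor
        · intro haT
          have hav : a'.1 = v := by
            have : a'.1 ∈ S ∩ T := ⟨haS, haT⟩
            rw [hST] at this; exact this
          have haeq : a' = (v, a'.2) := Prod.ext hav rfl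
          by_cases hδ : a'.2 = ε
          · rw [haeq, hδ]; exact hR
          · have hGvv : ConnIn EG (v, false) (v, true) := by
              apply toGvv a'.2 ε hδ
              rw [← haeq]; exact hav'
            rw [haeq]
            exact bridge ε a'.2 b' hGvv hR
        · intro _; exact ⟨ε, hav', hR⟩
  obtain ⟨W⟩ := h
  rcases (main W hy).1 hx with h1 | ⟨h1, ε, h2, h3⟩
  · exact Or.inl h1
  · exact Or.inr ⟨h1, ε, h2, h3⟩

/-- The event (x ∼_F y), for x, y vertices of H, is the disjoint union of the three
events A₁, A₂, A₃; in particular the pairwise intersections are empty and the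
probability of (x ∼_F y) is the sum of the three probabilities. -/
theorem conn_event_three_way_split {V : Type*} [Fintype V]
    (Fbar : SimpleGraph V) (v : V) (S T : Set V)
    (hcut : IsCutVertex Fbar v)
    (hST : S ∩ T = {v}) (hUnion : S ∪ T = Set.univ)
    (hSep : ∀ x ∈ S, ∀ y ∈ T, Fbar.Adj x y → x = v ∨ y = v)
    (μ : Sym2 (V × Bool) → ℝ) (hμ : IsWeight (BB Fbar) μ)
    (x y : V × Bool) (hx : x.1 ∈ T) (hy : y.1 ∈ T) :
    (∀ K : Finset (Sym2 (V × Bool)), K ⊆ edgeFin (BB Fbar) →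
      (ConnIn K x y ↔
        (ConnIn (K ∩ edgeFin (bbSideDel Fbar T v)) x y ∨
          (¬ ConnIn (K ∩ edgeFin (bbSideDel Fbar T v)) x y ∧
            ConnIn (K ∩ edgeFin (bbSideDel Fbar T v)) x (v, false) ∧
            ConnIn (K ∩ edgeFin (bbSideDel Fbar T v)) y (v, true) ∧
            ConnIn (K ∩ edgeFin (bbSide Fbar S)) (v, false) (v, true)) ∨
          (¬ ConnIn (K ∩ edgeFin (bbSideDel Fbar T v)) x y ∧
            ConnIn (K ∩ edgeFin (bbSideDel Fbar T v)) x (v, true) ∧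
            ConnIn (K ∩ edgeFin (bbSideDel Fbar T v)) y (v, false) ∧
            ConnIn (K ∩ edgeFin (bbSide Fbar S)) (v, false) (v, true))))) ∧
    (∀ K : Finset (Sym2 (V × Bool)),
      ¬ (ConnIn (K ∩ edgeFin (bbSideDel Fbar T v)) x y ∧
          (¬ ConnIn (K ∩ edgeFin (bbSideDel Fbar T v)) x y ∧
            ConnIn (K ∩ edgeFin (bbSideDel Fbar T v)) x (v, false) ∧
            ConnIn (K ∩ edgeFin (bbSideDel Fbar T v)) y (v, true) ∧
            ConnIn (K ∩ edgeFin (bbSide Fbar S)) (v, false) (v, true)))) ∧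
    (∀ K : Finset (Sym2 (V × Bool)),
      ¬ (ConnIn (K ∩ edgeFin (bbSideDel Fbar T v)) x y ∧
          (¬ ConnIn (K ∩ edgeFin (bbSideDel Fbar T v)) x y ∧
            ConnIn (K ∩ edgeFin (bbSideDel Fbar T v)) x (v, true) ∧
            ConnIn (K ∩ edgeFin (bbSideDel Fbar T v)) y (v, false) ∧
            ConnIn (K ∩ edgeFin (bbSide Fbar S)) (v, false) (v, true)))) ∧
    (∀ K : Finset (Sym2 (V × Bool)),
      ¬ ((¬ ConnIn (K ∩ edgeFin (bbSideDel Fbar T v)) x y ∧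
            ConnIn (K ∩ edgeFin (bbSideDel Fbar T v)) x (v, false) ∧
            ConnIn (K ∩ edgeFin (bbSideDel Fbar T v)) y (v, true) ∧
            ConnIn (K ∩ edgeFin (bbSide Fbar S)) (v, false) (v, true)) ∧
          (¬ ConnIn (K ∩ edgeFin (bbSideDel Fbar T v)) x y ∧
            ConnIn (K ∩ edgeFin (bbSideDel Fbar T v)) x (v, true) ∧
            ConnIn (K ∩ edgeFin (bbSideDel Fbar T v)) y (v, false) ∧
            ConnIn (K ∩ edgeFin (bbSide Fbar S)) (v, false) (v, true)))) ∧
    percProb (BB Fbar) μ (fun K => ConnIn K x y) =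
      percProb (BB Fbar) μ
          (fun K => ConnIn (K ∩ edgeFin (bbSideDel Fbar T v)) x y) +
        percProb (BB Fbar) μ
          (fun K => ¬ ConnIn (K ∩ edgeFin (bbSideDel Fbar T v)) x y ∧
            ConnIn (K ∩ edgeFin (bbSideDel Fbar T v)) x (v, false) ∧
            ConnIn (K ∩ edgeFin (bbSideDel Fbar T v)) y (v, true) ∧
            ConnIn (K ∩ edgeFin (bbSide Fbar S)) (v, false) (v, true)) +
        percProb (BB Fbar) μ
          (fun K => ¬ ConnIn (K ∩ edgeFin (bbSideDel Fbar T v)) x y ∧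
            ConnIn (K ∩ edgeFin (bbSideDel Fbar T v)) x (v, true) ∧
            ConnIn (K ∩ edgeFin (bbSideDel Fbar T v)) y (v, false) ∧
            ConnIn (K ∩ edgeFin (bbSide Fbar S)) (v, false) (v, true)) := by
  
  classical
  have hIff : ∀ K : Finset (Sym2 (V × Bool)), K ⊆ edgeFin (BB Fbar) →
      (ConnIn K x y ↔
        (ConnIn (K ∩ edgeFin (bbSideDel Fbar T v)) x y ∨
          (¬ ConnIn (K ∩ edgeFin (bbSideDel Fbar T v)) x y ∧
            ConnIn (K ∩ edgeFin (bbSideDel Fbar T v)) x (v, false) ∧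
            ConnIn (K ∩ edgeFin (bbSideDel Fbar T v)) y (v, true) ∧
            ConnIn (K ∩ edgeFin (bbSide Fbar S)) (v, false) (v, true)) ∨
          (¬ ConnIn (K ∩ edgeFin (bbSideDel Fbar T v)) x y ∧
            ConnIn (K ∩ edgeFin (bbSideDel Fbar T v)) x (v, true) ∧
            ConnIn (K ∩ edgeFin (bbSideDel Fbar T v)) y (v, false) ∧
            ConnIn (K ∩ edgeFin (bbSide Fbar S)) (v, false) (v, true)))) := by
    intro K hK
    constructor
    · intro h
      by_cases h1 : ConnIn (K ∩ edgeFin (bbSideDel Fbar T v)) x y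
      · exact Or.inl h1
      · rcases crossing hST hUnion hSep hK hx hy h with h' | ⟨hGvv, ε, h2, h3⟩
        · exact absurd h' h1
        · cases ε
          · exact Or.inr (Or.inl ⟨h1, h2, h3, hGvv⟩)
          · exact Or.inr (Or.inr ⟨h1, h2, h3, hGvv⟩)
    · rintro (h | ⟨-, h1, h2, h3⟩ | ⟨-, h1, h2, h3⟩)
      · exact connIn_mono Finset.inter_subset_left h
      · exact ((connIn_mono Finset.inter_subset_left h1).trans
            (connIn_mono Finset.inter_subset_left h3)).trans
          (connIn_mono Finset.inter_subset_left h2).symm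
      · exact ((connIn_mono Finset.inter_subset_left h1).trans
            (connIn_mono Finset.inter_subset_left h3).symm).trans
          (connIn_mono Finset.inter_subset_left h2).symm
  have hD : ∀ K : Finset (Sym2 (V × Bool)),
      ¬ ((¬ ConnIn (K ∩ edgeFin (bbSideDel Fbar T v)) x y ∧
            ConnIn (K ∩ edgeFin (bbSideDel Fbar T v)) x (v, false) ∧
            ConnIn (K ∩ edgeFin (bbSideDel Fbar T v)) y (v, true) ∧
            ConnIn (K ∩ edgeFin (bbSide Fbar S)) (v, false) (v, true)) ∧
          (¬ ConnIn (K ∩ edgeFin (bbSideDel Fbar T v)) x y ∧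
            ConnIn (K ∩ edgeFin (bbSideDel Fbar T v)) x (v, true) ∧
            ConnIn (K ∩ edgeFin (bbSideDel Fbar T v)) y (v, false) ∧
            ConnIn (K ∩ edgeFin (bbSide Fbar S)) (v, false) (v, true))) := by
    rintro K ⟨⟨hnxy, hxf, -, -⟩, -, -, hyf, -⟩
    exact hnxy (hxf.trans hyf.symm)
  refine ⟨hIff, ?_, ?_, hD, ?_⟩
  · rintro K ⟨h1, h2, -⟩; exact h2 h1
  · rintro K ⟨h1, h2, -⟩; exact h2 h1
  · unfold percProb
    rw [← Finset.sum_add_distrib, ← Finset.sum_add_distrib]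
    refine Finset.sum_congr rfl ?_
    intro K hKmem
    have hK := Finset.mem_powerset.1 hKmem
    have hiff := hIff K hK
    have hd := hD K
    beta_reduce
    by_cases hb : ConnIn (K ∩ edgeFin (bbSideDel Fbar T v)) x y
    · have ha : ConnIn K x y := hiff.2 (Or.inl hb)
      rw [if_pos ha, if_pos hb, if_neg (fun h => h.1 hb), if_neg (fun h => h.1 hb)]
      ring
    · by_cases hc : ¬ ConnIn (K ∩ edgeFin (bbSideDel Fbar T v)) x y ∧
          ConnIn (K ∩ edgeFin (bbSideDel Fbar T v)) x (v, false) ∧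
          ConnIn (K ∩ edgeFin (bbSideDel Fbar T v)) y (v, true) ∧
          ConnIn (K ∩ edgeFin (bbSide Fbar S)) (v, false) (v, true)
      · have ha : ConnIn K x y := hiff.2 (Or.inr (Or.inl hc))
        rw [if_pos ha, if_neg hb, if_pos hc, if_neg (fun h => hd ⟨hc, h⟩)]
        ring
      · by_cases hd' : ¬ ConnIn (K ∩ edgeFin (bbSideDel Fbar T v)) x y ∧
            ConnIn (K ∩ edgeFin (bbSideDel Fbar T v)) x (v, true) ∧
            ConnIn (K ∩ edgeFin (bbSideDel Fbar T v)) y (v, false) ∧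
            ConnIn (K ∩ edgeFin (bbSide Fbar S)) (v, false) (v, true)
        · have ha : ConnIn K x y := hiff.2 (Or.inr (Or.inr hd'))
          rw [if_pos ha, if_neg hb, if_neg hc, if_pos hd']
          ring
        · have ha : ¬ ConnIn K x y := fun h => by
            rcases hiff.1 h with h | h | h
            exacts [hb h, hc h, hd' h]
          rw [if_neg ha, if_neg hb, if_neg hc, if_neg hd']
          ring
end
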